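/- Let P₁, P₂ be sets of polynomials in ℝ[x₁,…,xₙ] and let S ⊆ ℝⁿ be a set with vanishing ideal I(S). Assume: (i) for every q ∈ I(S) and every ε > 0, q + ε lies in Σ + ⟨P₁⟩; (ii) for every p ∈ P₁ and every ε > 0, both p + ε and −p + ε lie in Σ + ⟨P₂⟩; and (iii) for every polynomial g ∈ ℝ[x₁,…,xₙ] there exists a real N > 0 such that N − (g² + 1) lies in Σ + ⟨P₂⟩. Then for every q ∈ I(S) and every ε > 0, q + ε lies in Σ + ⟨P₂⟩. -/

import Mathlib

/-!
The elements `x` with `±x + ε ∈ Σ + ⟨P₂⟩` for every `ε > 0` form an ideal. Closure under sums is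
immediate; closure under multiplication by an arbitrary `g` comes from `4gx = (g+1)²x - (g-1)²x`:
the squares `(g ± 1)²` multiply the error `ε` into `(g² + 1)ε`, and the archimedean bound
`N - (g² + 1) ∈ Σ + ⟨P₂⟩` brings it back to `Nε`. By (ii) this ideal contains `P₁`, hence `⟨P₁⟩`,
and (i) writes `q + ε` as a sum of squares plus an element of `⟨P₁⟩`.
-/

open MvPolynomial

/-- A polynomial is a sum of squares. -/
def IsSOS {n : ℕ} (σ : MvPolynomial (Fin n) ℝ) : Prop :=
  ∃ (t : ℕ) (s : Fin t → MvPolynomial (Fin n) ℝ), σ = ∑ i, (s i) ^ 2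

/-- `f` lies in `Σ + ⟨Q⟩`: it is a sum of squares plus an element of the ideal
generated by `Q`. -/
def MemSOSIdeal {n : ℕ} (Q : Set (MvPolynomial (Fin n) ℝ))
    (f : MvPolynomial (Fin n) ℝ) : Prop :=
  ∃ σ q, IsSOS σ ∧ q ∈ Ideal.span Q ∧ f = σ + q

theorem isSOS_iff_isSumSq {n : ℕ} {σ : MvPolynomial (Fin n) ℝ} : IsSOS σ ↔ IsSumSq σ := by
  constructor
  · rintro ⟨t, s, rfl⟩
    exact IsSumSq.sum_sq _ s
  · intro h
    induction h with
    | zero => exact ⟨0, fun _ => 0, by simp⟩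
    | sq_add a _ ih =>
      obtain ⟨t, s, rfl⟩ := ih
      exact ⟨t + 1, Fin.cons a s, by simp [Fin.sum_univ_succ, sq]⟩

theorem isSumSq_C {σ : Type*} {c : ℝ} (hc : 0 ≤ c) : IsSumSq (C c : MvPolynomial σ ℝ) :=
  IsSquare.isSumSq ⟨C √c, by rw [← map_mul, Real.mul_self_sqrt hc]⟩

namespace MemSOSIdeal

variable {n : ℕ} {Q : Set (MvPolynomial (Fin n) ℝ)} {f g : MvPolynomial (Fin n) ℝ}

theorem of_isSOS (hf : IsSOS f) : MemSOSIdeal Q f :=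
  ⟨f, 0, hf, Ideal.zero_mem _, (add_zero f).symm⟩

theorem C {c : ℝ} (hc : 0 ≤ c) : MemSOSIdeal Q (C c) :=
  of_isSOS (isSOS_iff_isSumSq.2 (isSumSq_C hc))

theorem add (hf : MemSOSIdeal Q f) (hg : MemSOSIdeal Q g) : MemSOSIdeal Q (f + g) := by
  obtain ⟨σ₁, q₁, hσ₁, hq₁, rfl⟩ := hf
  obtain ⟨σ₂, q₂, hσ₂, hq₂, rfl⟩ := hg
  refine ⟨σ₁ + σ₂, q₁ + q₂, ?_, Ideal.add_mem _ hq₁ hq₂, by ring⟩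
  rw [isSOS_iff_isSumSq] at *
  exact hσ₁.add hσ₂

theorem isSumSq_mul {s : MvPolynomial (Fin n) ℝ} (hs : IsSumSq s) (hf : MemSOSIdeal Q f) :
    MemSOSIdeal Q (s * f) := by
  obtain ⟨σ, q, hσ, hq, rfl⟩ := hf
  refine ⟨s * σ, s * q, ?_, Ideal.mul_mem_left _ _ hq, mul_add s σ q⟩
  rw [isSOS_iff_isSumSq] at *
  exact hs.mul hσ

theorem add_add_C_of_half {ε : ℝ} (hf : MemSOSIdeal Q (f + MvPolynomial.C (ε / 2)))
    (hg : MemSOSIdeal Q (g + MvPolynomial.C (ε / 2))) :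
    MemSOSIdeal Q (f + g + MvPolynomial.C ε) := by
  have hε : (MvPolynomial.C ε : MvPolynomial (Fin n) ℝ) =
      MvPolynomial.C (ε / 2) + MvPolynomial.C (ε / 2) := by
    rw [← map_add, add_halves]
  convert hf.add hg using 1
  rw [hε]
  ring

end MemSOSIdeal

def IsArchimedean {n : ℕ} (Q : Set (MvPolynomial (Fin n) ℝ)) : Prop :=
  ∀ g : MvPolynomial (Fin n) ℝ, ∃ N : ℝ, 0 < N ∧ MemSOSIdeal Q (C N - (g ^ 2 + 1))

def IsNegligible {n : ℕ} (Q : Set (MvPolynomial (Fin n) ℝ)) (x : MvPolynomial (Fin n) ℝ) :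
    Prop :=
  ∀ ε : ℝ, 0 < ε → MemSOSIdeal Q (x + C ε) ∧ MemSOSIdeal Q (-x + C ε)

namespace IsNegligible

variable {n : ℕ} {Q : Set (MvPolynomial (Fin n) ℝ)} {x y : MvPolynomial (Fin n) ℝ}

theorem zero : IsNegligible Q 0 := fun _ hε => by
  simpa using MemSOSIdeal.C (Q := Q) hε.le

theorem add (hx : IsNegligible Q x) (hy : IsNegligible Q y) : IsNegligible Q (x + y) :=
  fun ε hε =>
    ⟨(hx (ε / 2) (by positivity)).1.add_add_C_of_half (hy (ε / 2) (by positivity)).1,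
      by rw [neg_add]; exact
        (hx (ε / 2) (by positivity)).2.add_add_C_of_half (hy (ε / 2) (by positivity)).2⟩

theorem mul_left_add_C (harch : IsArchimedean Q) (hx : IsNegligible Q x) (g : MvPolynomial (Fin n) ℝ) {δ : ℝ} (hδ : 0 < δ) :
    MemSOSIdeal Q (g * x + C δ) := by
  obtain ⟨N, hN, hNg⟩ := harch g
  -- `¼(g+1)²(x + ε) + ¼(g-1)²(-x + ε) + (δ/N)(N - (g² + 1)) = gx + δ` for `ε = 2δ/N`
  obtain ⟨hpos, hneg⟩ := hx (2 * δ / N) (by positivity)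
  have hsum := ((MemSOSIdeal.isSumSq_mul (isSumSq_C (c := 1 / 4) (by norm_num))
      ((hpos.isSumSq_mul (IsSumSq.mul_self (g + 1))).add
        (hneg.isSumSq_mul (IsSumSq.mul_self (g - 1))))).add
    (hNg.isSumSq_mul (isSumSq_C (c := δ / N) (by positivity))))
  convert hsum using 1
  have hquarter : (C (1 / 4) : MvPolynomial (Fin n) ℝ) * 4 = 1 := by
    rw [← map_ofNat C 4, ← map_mul]; norm_num
  have hε : (C (1 / 4) : MvPolynomial (Fin n) ℝ) * (2 * C (2 * δ / N)) = C (δ / N) := by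
    rw [← map_ofNat C 2, ← map_mul, ← map_mul]; congr 1; ring
  have hN' : (C (δ / N) : MvPolynomial (Fin n) ℝ) * C N = C δ := by
    rw [← map_mul, div_mul_cancel₀ _ hN.ne']
  linear_combination (-(g * x)) * hquarter - (g ^ 2 + 1) * hε - hN'

theorem mul_left (harch : IsArchimedean Q) (hx : IsNegligible Q x) (g : MvPolynomial (Fin n) ℝ) : IsNegligible Q (g * x) :=
  fun _ hε => ⟨hx.mul_left_add_C harch g hε, by simpa using hx.mul_left_add_C harch (-g) hε⟩

theorem of_mem_span {P : Set (MvPolynomial (Fin n) ℝ)} (harch : IsArchimedean Q)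
    (hP : ∀ p ∈ P, IsNegligible Q p) (hx : x ∈ Ideal.span P) : IsNegligible Q x := by
  induction hx using Submodule.span_induction with
  | mem p hp => exact hP p hp
  | zero => exact zero
  | add _ _ _ _ ha hb => exact ha.add hb
  | smul g _ _ h => exact h.mul_left harch g

end IsNegligible

theorem statement7 (n : ℕ) (P₁ P₂ : Set (MvPolynomial (Fin n) ℝ))
    (S : Set (Fin n → ℝ))
    (h1 : ∀ q : MvPolynomial (Fin n) ℝ, (∀ α ∈ S, MvPolynomial.eval α q = 0) →
      ∀ ε : ℝ, 0 < ε → MemSOSIdeal P₁ (q + MvPolynomial.C ε))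
    (h12 : ∀ p ∈ P₁, ∀ ε : ℝ, 0 < ε →
      MemSOSIdeal P₂ (p + MvPolynomial.C ε) ∧ MemSOSIdeal P₂ (-p + MvPolynomial.C ε))
    (harch : ∀ g : MvPolynomial (Fin n) ℝ, ∃ N : ℝ, 0 < N ∧
      MemSOSIdeal P₂ (MvPolynomial.C N - (g ^ 2 + 1))) :
    ∀ q : MvPolynomial (Fin n) ℝ, (∀ α ∈ S, MvPolynomial.eval α q = 0) →
      ∀ ε : ℝ, 0 < ε → MemSOSIdeal P₂ (q + MvPolynomial.C ε) := by
  intro q hq ε hε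
  obtain ⟨σ, p, hσ, hp, hqσp⟩ := h1 q hq (ε / 2) (by positivity)
  have hpneg : IsNegligible P₂ p := IsNegligible.of_mem_span harch h12 hp
  have hsplit : q + C ε = σ + (p + C (ε / 2)) := by
    have hε : (C ε : MvPolynomial (Fin n) ℝ) = C (ε / 2) + C (ε / 2) := by
      rw [← map_add, add_halves]
    linear_combination hqσp + hε
  rw [hsplit]
  exact (MemSOSIdeal.of_isSOS hσ).add (hpneg (ε / 2) (by positivity)).1
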